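/- For every n ∈ ℕ and all t ∈ ℝ, (d/dt) [ e^{−t/2} T_n(t) ] = ((−1)^{n+1}/4) L_n(t) e^{−t/2}. -/

import Mathlib

/-!
By Pascal's rule, `L_{n+1} - L_n = Σ_k (n choose k) (−x)^{k+1}/(k+1)!` is the antiderivative
of `−L_n` vanishing at `0`. Since `T_{n+1} − T_n = −((−1)^n/2) (L_{n+1} − L_n)`, induction on `n`
gives `T_n' = T_n/2 − ((−1)^n/4) L_n`; the factor `e^{−t/2}` then cancels the `T_n/2` term.
-/

open MeasureTheory

noncomputable section

/-- The `n`-th Laguerre polynomial `L_n(x) = Σ_{k=0}^n (n choose k) (−x)^k / k!`. -/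
def laguerreFun (n : ℕ) (x : ℝ) : ℝ :=
  ∑ k ∈ Finset.range (n + 1), (n.choose k : ℝ) * (-x) ^ k / (k.factorial : ℝ)

/-- `T_n(X) = Σ_{k=0}^{n−1} (−1)^k L_k(X) + ((−1)^n/2) L_n(X)`. -/
def Tfun (n : ℕ) (X : ℝ) : ℝ :=
  (∑ k ∈ Finset.range n, (-1 : ℝ) ^ k * laguerreFun k X) +
    (-1 : ℝ) ^ n / 2 * laguerreFun n X

/-- `V_α(X) = 4 e^{−X/2} Σ_{k=0}^{d−1} C(d−1,k) T_{|α|+k}(X)`. -/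
def Vfun (d : ℕ) (α : Fin d → ℕ) (X : ℝ) : ℝ :=
  4 * Real.exp (-X / 2) *
    ∑ k ∈ Finset.range d, ((d - 1).choose k : ℝ) * Tfun ((∑ j, α j) + k) X

lemma laguerreFun_zero (x : ℝ) : laguerreFun 0 x = 1 := by
  simp [laguerreFun]

lemma laguerreFun_succ_sub (n : ℕ) (x : ℝ) :
    laguerreFun (n + 1) x - laguerreFun n x =
      ∑ k ∈ Finset.range (n + 1), (n.choose k : ℝ) * ((-x) ^ (k + 1) / ((k + 1).factorial : ℝ)) := by
  have pascal : laguerreFun (n + 1) x =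
      ∑ k ∈ Finset.range (n + 1), (n.choose (k + 1) : ℝ) * (-x) ^ (k + 1) / ((k + 1).factorial : ℝ)
        + ∑ k ∈ Finset.range (n + 1), (n.choose k : ℝ) * ((-x) ^ (k + 1) / ((k + 1).factorial : ℝ))
        + 1 := by
    rw [laguerreFun, Finset.sum_range_succ', ← Finset.sum_add_distrib]
    simp only [Nat.choose_succ_succ, Nat.cast_add, Nat.choose_zero_right, Nat.cast_one, pow_zero,
      Nat.factorial_zero, div_one, mul_one]
    congr 1
    exact Finset.sum_congr rfl fun k _ => by ring
  have reindex : laguerreFun n x =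
      ∑ k ∈ Finset.range (n + 1), (n.choose (k + 1) : ℝ) * (-x) ^ (k + 1) / ((k + 1).factorial : ℝ)
        + 1 := by
    rw [laguerreFun, Finset.sum_range_succ', Finset.sum_range_succ]
    simp
  rw [pascal, reindex]
  ring

lemma hasDerivAt_neg_pow_succ_div_factorial (k : ℕ) (t : ℝ) :
    HasDerivAt (fun x : ℝ => (-x) ^ (k + 1) / ((k + 1).factorial : ℝ))
      (-((-t) ^ k / (k.factorial : ℝ))) t := by
  have h := (((hasDerivAt_pow (k + 1) (-t)).comp t (hasDerivAt_neg t)).div_const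
    ((k + 1).factorial : ℝ))
  refine h.congr_deriv ?_
  rw [Nat.factorial_succ, Nat.cast_mul]
  field_simp
  push_cast
  ring

lemma hasDerivAt_laguerreFun_succ_sub (n : ℕ) (t : ℝ) :
    HasDerivAt (fun x => laguerreFun (n + 1) x - laguerreFun n x) (-laguerreFun n t) t := by
  have h := HasDerivAt.fun_sum (u := Finset.range (n + 1)) fun k _ =>
    (hasDerivAt_neg_pow_succ_div_factorial k t).const_mul (n.choose k : ℝ)
  rw [funext (laguerreFun_succ_sub n)]
  refine h.congr_deriv ?_
  rw [laguerreFun, ← Finset.sum_neg_distrib]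
  exact Finset.sum_congr rfl fun k _ => by ring

lemma Tfun_succ (n : ℕ) (X : ℝ) :
    Tfun (n + 1) X = Tfun n X - (-1 : ℝ) ^ n / 2 * (laguerreFun (n + 1) X - laguerreFun n X) := by
  rw [Tfun, Tfun, Finset.sum_range_succ, pow_succ]
  ring

lemma hasDerivAt_Tfun (n : ℕ) (t : ℝ) :
    HasDerivAt (Tfun n) (Tfun n t / 2 - (-1 : ℝ) ^ n / 4 * laguerreFun n t) t := by
  induction n with
  | zero =>
    have hT : Tfun 0 = fun _ => 1 / 2 := funext fun x => by simp [Tfun, laguerreFun_zero]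
    rw [hT]
    exact (hasDerivAt_const t _).congr_deriv (by norm_num [laguerreFun_zero])
  | succ n ih =>
    rw [funext (Tfun_succ n)]
    refine (ih.sub ((hasDerivAt_laguerreFun_succ_sub n t).const_mul ((-1 : ℝ) ^ n / 2))).congr_deriv
      ?_
    beta_reduce
    rw [pow_succ]
    ring

theorem deriv_exp_mul_T (n : ℕ) (t : ℝ) :
    deriv (fun s => Real.exp (-s / 2) * Tfun n s) t =
      (-1 : ℝ) ^ (n + 1) / 4 * laguerreFun n t * Real.exp (-t / 2) := by
  have hexp : HasDerivAt (fun s : ℝ => Real.exp (-s / 2)) (Real.exp (-t / 2) * (-1 / 2)) t :=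
    ((hasDerivAt_neg t).div_const 2).exp
  refine (hexp.mul (hasDerivAt_Tfun n t)).deriv.trans ?_
  rw [pow_succ]
  ring
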